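/- Let L ≥ 2 be an integer, η ∈ ℂ, x₁,…,x_{L−1} ∈ ℂ with x_i − x_j ∉ iπℤ for i ≠ j, and let f : ℂ → ℂ be a function such that f(t) converges to a limit f_∞ ∈ ℂ as t → +∞ along the real axis. Then lim_{t→+∞, t real} A_{(x₁,…,x_{L−1},t)}[f] = (1 − f_∞·e^{−(L−1)η}) · A_{(x₁,…,x_{L−1})}[e^η·f], where e^η·f denotes the function λ ↦ e^η f(λ). -/

import Mathlib

open Complex Finset Filter

noncomputable section

def Vand {m : ℕ} (x : Fin m → ℂ) : ℂ :=
  ∏ i : Fin m, ∏ j ∈ Finset.Ioi i, Complex.sinh (x j - x i)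

/-- the SoV determinant functional `A_{(y₁,…,y_m)}[g]` -/
def Afun {m : ℕ} (η : ℂ) (y : Fin m → ℂ) (g : ℂ → ℂ) : ℂ :=
  Matrix.det (Matrix.of (fun i j : Fin m =>
      Complex.exp ((2 * ((j : ℕ) : ℂ) + 1 - (m : ℂ)) * y i) / 2 ^ (j : ℕ) -
        g (y i) *
          Complex.exp ((2 * ((j : ℕ) : ℂ) + 1 - (m : ℂ)) * (y i - η)) / 2 ^ (j : ℕ))) /
    Vand y

def iπ : ℂ := (Real.pi : ℂ) * Complex.I

/-!
Multiply the row of the last variable `t` by `2ⁿ e^{-n t}`. Its column `j` becomes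
`(2 e^{-2t})^{n-j} (1 - f(t) e^{(n-2j)η})`, which tends to `0` for `j < n` and to
`1 - f_∞ e^{-nη}` for `j = n`; the same factor turns `∏ᵢ sinh(t - xᵢ)`, the new part of the
denominator, into `∏ᵢ (e^{-xᵢ} - e^{xᵢ} e^{-2t}) → ∏ᵢ e^{-xᵢ}`. Expanding the limiting
determinant along its last row leaves the `n × n` minor whose row `i` is `e^{-xᵢ}` times the row
of `xᵢ` in `A_{(x₁,…,xₙ)}[e^η f]`, and the factors `e^{-xᵢ}` cancel against the denominator.
-/

open Topology

def afunEntry (η : ℂ) (m : ℕ) (g : ℂ → ℂ) (y : ℂ) (j : ℕ) : ℂ :=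
  exp ((2 * (j : ℂ) + 1 - m) * y) / 2 ^ j - g y * exp ((2 * (j : ℂ) + 1 - m) * (y - η)) / 2 ^ j

def afunRow (η : ℂ) (m : ℕ) (g : ℂ → ℂ) (y : ℂ) (j : Fin m) : ℂ :=
  afunEntry η m g y j

lemma afun_eq_det_div {m : ℕ} (η : ℂ) (y : Fin m → ℂ) (g : ℂ → ℂ) :
    Afun η y g = (Matrix.of (afunRow η m g ∘ y)).det / Vand y :=
  rfl

lemma afunEntry_eq_mul (η : ℂ) (m : ℕ) (g : ℂ → ℂ) (y : ℂ) (j : ℕ) :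
    afunEntry η m g y j =
      exp ((2 * (j : ℂ) + 1 - m) * y) / 2 ^ j * (1 - g y * exp (-(2 * (j : ℂ) + 1 - m) * η)) := by
  have h : exp ((2 * (j : ℂ) + 1 - m) * (y - η)) =
      exp ((2 * (j : ℂ) + 1 - m) * y) * exp (-(2 * (j : ℂ) + 1 - m) * η) := by
    rw [← exp_add]; ring_nf
  rw [afunEntry, h]
  ring

lemma afunEntry_succ (η : ℂ) (m : ℕ) (g : ℂ → ℂ) (y : ℂ) (j : ℕ) :
    afunEntry η (m + 1) g y j = exp (-y) * afunEntry η m (fun l => exp η * g l) y j := by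
  have h₁ : exp ((2 * (j : ℂ) + 1 - (m + 1 : ℕ)) * y) =
      exp (-y) * exp ((2 * (j : ℂ) + 1 - m) * y) := by
    rw [← exp_add]; push_cast; ring_nf
  have h₂ : exp (-(2 * (j : ℂ) + 1 - (m + 1 : ℕ)) * η) =
      exp η * exp (-(2 * (j : ℂ) + 1 - m) * η) := by
    rw [← exp_add]; push_cast; ring_nf
  rw [afunEntry_eq_mul, afunEntry_eq_mul, h₁, h₂]
  ring

lemma two_pow_mul_exp_mul_afunEntry (η : ℂ) (g : ℂ → ℂ) (t : ℂ) (j k : ℕ) :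
    2 ^ (j + k) * exp (-(j + k : ℕ) * t) * afunEntry η (j + k + 1) g t j =
      (2 * exp (-2 * t)) ^ k * (1 - g t * exp ((k - j : ℂ) * η)) := by
  have h : exp (-(j + k : ℕ) * t) * exp ((2 * (j : ℂ) + 1 - (j + k + 1 : ℕ)) * t) =
      exp (-2 * t) ^ k := by
    rw [← exp_add, ← exp_nat_mul]; push_cast; ring_nf
  rw [afunEntry_eq_mul, mul_pow, pow_add, ← h]
  push_cast
  field_simp
  ring_nf

lemma tendsto_cexp_neg_two_mul : Tendsto (fun t : ℝ => exp (-2 * t)) atTop (𝓝 0) := by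
  refine tendsto_exp_comap_re_atBot.comp (tendsto_comap_iff.2 ?_)
  simpa [Function.comp_def] using tendsto_id.const_mul_atTop_of_neg (by norm_num : (-2 : ℝ) < 0)

lemma two_mul_exp_neg_mul_sinh (t x : ℂ) :
    2 * exp (-t) * sinh (t - x) = exp (-x) - exp x * exp (-2 * t) := by
  have h₁ : exp (-t) * exp (t - x) = exp (-x) := by rw [← exp_add]; ring_nf
  have h₂ : exp (-t) * exp (-(t - x)) = exp x * exp (-2 * t) := by
    rw [← exp_add, ← exp_add]; ring_nf
  rw [mul_right_comm, two_sinh]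
  linear_combination h₁ - h₂

lemma tendsto_prod_two_mul_exp_neg_mul_sinh {n : ℕ} (x : Fin n → ℂ) :
    Tendsto (fun t : ℝ => ∏ i, 2 * exp (-t) * sinh (t - x i)) atTop (𝓝 (∏ i, exp (-x i))) := by
  simp only [two_mul_exp_neg_mul_sinh]
  refine tendsto_finsetProd _ fun i _ => ?_
  simpa using tendsto_const_nhds.sub (tendsto_cexp_neg_two_mul.const_mul (exp (x i)))

lemma vand_snoc {n : ℕ} (x : Fin n → ℂ) (t : ℂ) :
    Vand (Fin.snoc x t) = Vand x * ∏ i, sinh (t - x i) := by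
  have hIoi (i : Fin n) : Ioi i.castSucc = insert (Fin.last n) ((Ioi i).map Fin.castSuccEmb) := by
    rw [Fin.map_castSuccEmb_Ioi, Finset.Ioo_insert_right (Fin.castSucc_lt_last i),
      ← Fin.top_eq_last, Finset.Ioc_top]
  have hlast : Ioi (Fin.last n) = ∅ := Finset.Ioi_top
  simp only [Vand, Fin.prod_univ_castSucc, hIoi, hlast, prod_empty, mul_one]
  rw [← prod_mul_distrib]
  refine prod_congr rfl fun i _ => ?_
  rw [prod_insert (by simp), prod_map]
  simp only [Fin.snoc_castSucc, Fin.snoc_last, Fin.coe_castSuccEmb, mul_comm]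

lemma det_of_snoc_smul {R : Type*} [CommRing R] {n : ℕ} (rows : Fin n → Fin (n + 1) → R)
    (r : Fin (n + 1) → R) (c : R) :
    (Matrix.of (Fin.snoc rows (c • r))).det = c * (Matrix.of (Fin.snoc rows r)).det := by
  have h (u : Fin (n + 1) → R) :
      Matrix.of (Fin.snoc rows u) = (Matrix.of (Fin.snoc rows r)).updateRow (Fin.last n) u := by
    ext i j
    refine Fin.lastCases ?_ (fun i => ?_) i <;> simp [Matrix.updateRow_apply]
  rw [h, Matrix.det_updateRow_smul, ← h]

lemma det_of_snoc_single_last {R : Type*} [CommRing R] {n : ℕ} (rows : Fin n → Fin (n + 1) → R)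
    (c : R) :
    (Matrix.of (Fin.snoc rows (Pi.single (Fin.last n) c))).det =
      c * (Matrix.of fun i j => rows i j.castSucc).det := by
  have hminor : (Matrix.of (Fin.snoc rows (Pi.single (Fin.last n) c))).submatrix Fin.castSucc
      Fin.castSucc = Matrix.of fun i j => rows i j.castSucc := by
    ext i j
    simp only [Matrix.submatrix_apply, Matrix.of_apply, Fin.snoc_castSucc]
  rw [Matrix.det_succ_row _ (Fin.last n), sum_eq_single (Fin.last n) (fun j _ hj => by simp [hj])
    (by simp), Fin.succAbove_last, hminor]
  simp [← two_mul, pow_mul]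

lemma afun_snoc {n : ℕ} (η : ℂ) (x : Fin n → ℂ) (g : ℂ → ℂ) (t : ℂ) {c : ℂ} (hc : c ≠ 0) :
    Afun η (Fin.snoc x t) g =
      (Matrix.of (Fin.snoc (afunRow η (n + 1) g ∘ x) (c • afunRow η (n + 1) g t))).det /
        (c * ∏ i, sinh (t - x i)) / Vand x := by
  rw [afun_eq_det_div, Fin.comp_snoc, vand_snoc, det_of_snoc_smul]
  field_simp

lemma tendsto_smul_afunRow {n : ℕ} (η : ℂ) {f : ℂ → ℂ} {finf : ℂ}
    (hf : Tendsto (fun t : ℝ => f t) atTop (𝓝 finf)) :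
    Tendsto (fun t : ℝ => (2 ^ n * exp (-n * t)) • afunRow η (n + 1) f t)
      atTop (𝓝 (Pi.single (Fin.last n) (1 - finf * exp (-n * η)))) := by
  refine tendsto_pi_nhds.2 fun j => ?_
  obtain ⟨k, hk⟩ : ∃ k, n = j + k := ⟨n - j, by omega⟩
  have hentry (t : ℝ) : 2 ^ n * exp (-n * t) * afunRow η (n + 1) f t j =
      (2 * exp (-2 * t)) ^ k * (1 - f t * exp ((k - j : ℂ) * η)) := by
    have := two_pow_mul_exp_mul_afunEntry η f t j k
    rwa [← hk] at this
  simp only [Pi.smul_apply, smul_eq_mul, hentry]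
  convert ((tendsto_cexp_neg_two_mul.const_mul 2).pow k).mul
    (tendsto_const_nhds.sub (hf.mul_const (exp ((k - j : ℂ) * η)))) using 2
  rcases k with _ | k
  · obtain rfl : j = Fin.last n := Fin.ext (by simp [hk])
    simp
  · have hj : j ≠ Fin.last n := Fin.ne_of_val_ne (by simp only [Fin.val_last]; omega)
    simp [hj]

lemma det_of_snoc_afunRow_single_last {n : ℕ} (η : ℂ) (x : Fin n → ℂ) (g : ℂ → ℂ) (c : ℂ) :
    (Matrix.of (Fin.snoc (afunRow η (n + 1) g ∘ x) (Pi.single (Fin.last n) c))).det =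
      c * ((∏ i, exp (-x i)) * (Matrix.of (afunRow η n (fun l => exp η * g l) ∘ x)).det) := by
  rw [det_of_snoc_single_last, ← Matrix.det_mul_column]
  simp only [Function.comp_apply, afunRow, Fin.val_castSucc, afunEntry_succ, Matrix.of_apply]

lemma tendsto_det_of_snoc_smul_afunRow {n : ℕ} (η : ℂ) (x : Fin n → ℂ) {f : ℂ → ℂ} {finf : ℂ}
    (hf : Tendsto (fun t : ℝ => f t) atTop (𝓝 finf)) :
    Tendsto (fun t : ℝ => (Matrix.of (Fin.snoc (afunRow η (n + 1) f ∘ x)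
        ((2 ^ n * exp (-n * t)) • afunRow η (n + 1) f t))).det) atTop
      (𝓝 ((1 - finf * exp (-n * η)) *
        ((∏ i, exp (-x i)) * (Matrix.of (afunRow η n (fun l => exp η * f l) ∘ x)).det))) := by
  have hrows := tendsto_const_nhds.finSnoc (A := fun _ : Fin (n + 1) => Fin (n + 1) → ℂ)
    (x := afunRow η (n + 1) f ∘ x) (tendsto_smul_afunRow η hf)
  rw [← det_of_snoc_afunRow_single_last]
  exact (continuous_id.matrix_det.tendsto _).comp hrows

theorem Afun_limit_last_variable_general (n : ℕ) (η : ℂ) (x : Fin n → ℂ)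
    (f : ℂ → ℂ) (finf : ℂ)
    (hf : Tendsto (fun t : ℝ => f (t : ℂ)) atTop (nhds finf)) :
    Tendsto (fun t : ℝ => Afun η (Fin.snoc x (t : ℂ)) f) atTop
      (nhds ((1 - finf * Complex.exp (-(n : ℂ) * η)) *
        Afun η x (fun l => Complex.exp η * f l))) := by
  have hsnoc (t : ℝ) :=
    afun_snoc η x f t (c := 2 ^ n * exp (-n * t)) (mul_ne_zero (by simp) (exp_ne_zero _))
  have hden (t : ℝ) :
      2 ^ n * exp (-n * t) * ∏ i, sinh (t - x i) = ∏ i, 2 * exp (-t) * sinh (t - x i) := by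
    rw [prod_mul_distrib, prod_const, card_univ, Fintype.card_fin, mul_pow, ← exp_nat_mul]
    ring_nf
  have hprod : ∏ i, exp (-x i) ≠ 0 := prod_ne_zero_iff.2 fun i _ => exp_ne_zero _
  simp only [hsnoc, hden]
  convert ((tendsto_det_of_snoc_smul_afunRow η x hf).div
    (tendsto_prod_two_mul_exp_neg_mul_sinh x) hprod).div_const (Vand x) using 2
  · rfl
  rw [afun_eq_det_div, mul_left_comm, mul_div_cancel_left₀ _ hprod, mul_div_assoc]

/-- (Identity 4 of the paper.) Sending the last variable to `+∞`
along the real axis reduces the size of the determinant: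
`lim_{t→+∞} A_{(x₁,…,x_{L−1},t)}[f] = (1 − f_∞ e^{−(L−1)η}) · A_{(x₁,…,x_{L−1})}[e^η f]`,
where `L = n+1 ≥ 2`. -/
theorem Afun_limit_last_variable (n : ℕ) (hn : 1 ≤ n) (η : ℂ) (x : Fin n → ℂ)
    (hx : ∀ i j, i ≠ j → ∀ m : ℤ, x i - x j ≠ (m : ℂ) * iπ)
    (f : ℂ → ℂ) (finf : ℂ)
    (hf : Tendsto (fun t : ℝ => f (t : ℂ)) atTop (nhds finf)) :
    Tendsto (fun t : ℝ => Afun η (Fin.snoc x (t : ℂ)) f) atTop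
      (nhds ((1 - finf * Complex.exp (-(n : ℂ) * η)) *
        Afun η x (fun l => Complex.exp η * f l))) :=
  Afun_limit_last_variable_general n η x f finf hf

end
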